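/- Every snake graph with n tiles has at least n + 1 perfect matchings. -/

import Mathlib

namespace SnakeGraph

/-- A vertex of the square lattice. -/
abbrev Vertex : Type := ℤ × ℤ

/-- An edge of the square lattice: a base vertex together with `true` for a
horizontal edge (from `v` to `v + (1,0)`) or `false` for a vertical edge
(from `v` to `v + (0,1)`). -/
abbrev Edge : Type := Vertex × Bool

/-- The two endpoints of an edge. -/
def endpoints (e : Edge) : Finset Vertex :=
  {e.1, if e.2 then (e.1.1 + 1, e.1.2) else (e.1.1, e.1.2 + 1)}

/-- The gluing direction between two consecutive tiles of a snake graph: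
the north or the east edge of a tile is glued to the south, resp. west,
edge of the next tile. -/
inductive Dir : Type
  | east : Dir
  | north : Dir
deriving DecidableEq

def stepDir : Dir → Vertex
  | .east => (1, 0)
  | .north => (0, 1)

/-- The position (south-west corner) of the `i`-th tile (tiles are 0-indexed),
for the snake graph with gluing directions `d 0, d 1, ...`. -/
def tilePos (d : ℕ → Dir) : ℕ → Vertex
  | 0 => (0, 0)
  | i + 1 => tilePos d i + stepDir (d i)

/-- South edge of the tile with south-west corner `p`. -/
def S (p : Vertex) : Edge := (p, true)

/-- North edge of the tile with south-west corner `p`. -/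
def N (p : Vertex) : Edge := ((p.1, p.2 + 1), true)

/-- West edge of the tile with south-west corner `p`. -/
def W (p : Vertex) : Edge := (p, false)

/-- East edge of the tile with south-west corner `p`. -/
def E (p : Vertex) : Edge := ((p.1 + 1, p.2), false)

/-- The four edges of the tile with south-west corner `p`. -/
def tileEdges (p : Vertex) : Finset Edge := {S p, N p, W p, E p}

/-- The four vertices of the tile with south-west corner `p`. -/
def tileVertices (p : Vertex) : Finset Vertex :=
  {p, (p.1 + 1, p.2), (p.1, p.2 + 1), (p.1 + 1, p.2 + 1)}

/-- The edge set of the sub snake graph consisting of tiles `lo, ..., n-1`. -/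
def edgesFrom (d : ℕ → Dir) (lo n : ℕ) : Finset Edge :=
  (Finset.Ico lo n).biUnion fun i => tileEdges (tilePos d i)

/-- The vertex set of the sub snake graph consisting of tiles `lo, ..., n-1`. -/
def verticesFrom (d : ℕ → Dir) (lo n : ℕ) : Finset Vertex :=
  (Finset.Ico lo n).biUnion fun i => tileVertices (tilePos d i)

/-- The edge set of the snake graph with `n` tiles and gluing directions `d`. -/
def edges (d : ℕ → Dir) (n : ℕ) : Finset Edge := edgesFrom d 0 n

/-- The vertex set of the snake graph with `n` tiles and gluing directions `d`. -/
def vertices (d : ℕ → Dir) (n : ℕ) : Finset Vertex := verticesFrom d 0 n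

/-- The interior (glued) edge `e_i` shared by tiles `i` and `i+1`. -/
def glueEdge (d : ℕ → Dir) (i : ℕ) : Edge :=
  match d i with
  | .east => E (tilePos d i)
  | .north => N (tilePos d i)

/-- `M` is a perfect matching of the graph with vertex set `Vs` and edge set
`Es`: a set of edges covering every vertex exactly once. -/
def IsPM (Vs : Finset Vertex) (Es : Finset Edge) (M : Finset Edge) : Prop :=
  M ⊆ Es ∧ ∀ v ∈ Vs, (M.filter fun e => v ∈ endpoints e).card = 1

/-- `M` is a perfect matching of the snake graph with `n` tiles and gluing
directions `d`. -/
def IsPerfectMatching (d : ℕ → Dir) (n : ℕ) (M : Finset Edge) : Prop :=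
  IsPM (vertices d n) (edges d n) M

/-- A sign function on the snake graph with `n` tiles: on every tile,
`sgn N = sgn W`, `sgn S = sgn E`, and `sgn N ≠ sgn S`
(`true` stands for `+`, `false` for `−`). -/
def IsSignFunction (d : ℕ → Dir) (n : ℕ) (f : Edge → Bool) : Prop :=
  ∀ i < n,
    f (N (tilePos d i)) = f (W (tilePos d i)) ∧
    f (S (tilePos d i)) = f (E (tilePos d i)) ∧
    f (N (tilePos d i)) ≠ f (S (tilePos d i))

/-- A snake graph is zig-zag if no three consecutive tiles are glued in the
same direction. -/
def IsZigZag (d : ℕ → Dir) (n : ℕ) : Prop :=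
  ∀ i, i + 2 < n → d i ≠ d (i + 1)

/-- A snake graph is straight if all gluings are in the same direction. -/
def IsStraight (d : ℕ → Dir) (n : ℕ) : Prop :=
  ∀ i j, i + 1 < n → j + 1 < n → d i = d j

end SnakeGraph

/-!
Grade the lattice by the level `x + y` of a vertex, so that every edge joins consecutive levels.
The snake graph has a single vertex at level `0` and at level `n + 1`, and at level `i + 1`
(`i < n`) the two corners `corner d i .east` and `corner d i .north` of tile `i`. Choosing for
every tile `i` the corner `X i` that is matched upwards yields a set of `n + 1` edges, one between
any two consecutive levels, and it is a perfect matching as soon as the choice is admissible.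
The lower endpoint of the edge leaving level `i + 1` is `corner d i (X i)`, so different choices
give different matchings; the choices `flipState d j`, `j ≤ n`, are admissible and those for
`j < k` differ at tile `j`.
-/

namespace SnakeGraph

def Dir.swap : Dir → Dir
  | .east => .north
  | .north => .east

lemma Dir.swap_ne_self (a : Dir) : a.swap ≠ a := by
  cases a <;> decide

lemma Dir.eq_swap_of_ne {a b : Dir} (h : a ≠ b) : a = b.swap := by
  cases a <;> cases b <;> simp_all [Dir.swap]

lemma stepDir_add_stepDir_swap (a : Dir) : stepDir a + stepDir a.swap = (1, 1) := by
  cases a <;> rfl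

lemma stepDir_injective : Function.Injective stepDir := by
  intro a b h
  cases a <;> cases b <;> simp_all [stepDir]

def edgeFrom (v : Vertex) : Dir → Edge
  | .east => (v, true)
  | .north => (v, false)

lemma endpoints_edgeFrom (v : Vertex) (a : Dir) :
    endpoints (edgeFrom v a) = {v, v + stepDir a} := by
  cases a <;> simp [endpoints, edgeFrom, stepDir, Prod.add_def]

lemma edgeFrom_mem_tileEdges (p : Vertex) (a : Dir) : edgeFrom p a ∈ tileEdges p := by
  cases a <;> simp [edgeFrom, tileEdges, S, W]

lemma edgeFrom_add_stepDir_mem_tileEdges (p : Vertex) (a : Dir) :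
    edgeFrom (p + stepDir a) a.swap ∈ tileEdges p := by
  cases a <;> simp [edgeFrom, tileEdges, Dir.swap, stepDir, E, N, Prod.ext_iff]

lemma tileVertices_eq (p : Vertex) :
    tileVertices p = {p, p + stepDir .east, p + stepDir .north, p + (1, 1)} := by
  simp [tileVertices, stepDir, Prod.add_def]

def level (v : Vertex) : ℤ := v.1 + v.2

lemma level_add (u v : Vertex) : level (u + v) = level u + level v := by
  simp only [level, Prod.fst_add, Prod.snd_add]
  ring

lemma level_stepDir (a : Dir) : level (stepDir a) = 1 := by
  cases a <;> rfl

lemma eq_of_pair_eq_of_level_lt {a b c e : Vertex} (h : ({a, b} : Finset Vertex) = {c, e})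
    (hab : level a < level b) (hce : level c < level e) : a = c := by
  have ha : a ∈ ({c, e} : Finset Vertex) := h ▸ Finset.mem_insert_self a {b}
  have hc : c ∈ ({a, b} : Finset Vertex) := h.symm ▸ Finset.mem_insert_self c {e}
  simp only [Finset.mem_insert, Finset.mem_singleton] at ha hc
  rcases ha with ha | rfl
  · exact ha
  · rcases hc with hc | rfl
    · exact hc.symm
    · exact absurd (hab.trans hce) (lt_irrefl _)

variable (d : ℕ → Dir)

lemma level_tilePos (i : ℕ) : level (tilePos d i) = i := by
  induction i with
  | zero => rfl
  | succ i ih =>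
    rw [tilePos, level_add, ih, level_stepDir]
    push_cast
    ring

def corner (i : ℕ) (a : Dir) : Vertex := tilePos d i + stepDir a

def northEast (i : ℕ) : Vertex := tilePos d i + (1, 1)

lemma level_corner (i : ℕ) (a : Dir) : level (corner d i a) = i + 1 := by
  rw [corner, level_add, level_tilePos, level_stepDir]

lemma level_northEast (i : ℕ) : level (northEast d i) = i + 2 := by
  rw [northEast, level_add, level_tilePos]
  rfl

lemma corner_injective (i : ℕ) : Function.Injective (corner d i) :=
  fun _ _ h => stepDir_injective (add_left_cancel h)

lemma tilePos_succ (i : ℕ) : tilePos d (i + 1) = corner d i (d i) := rfl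

lemma corner_add_stepDir_swap (i : ℕ) (a : Dir) :
    corner d i a + stepDir a.swap = northEast d i := by
  rw [corner, add_assoc, stepDir_add_stepDir_swap, northEast]

lemma northEast_eq_corner_succ (i : ℕ) : northEast d i = corner d (i + 1) (d i).swap := by
  rw [corner, tilePos_succ, corner_add_stepDir_swap]

lemma mem_edges_of_mem_tileEdges {n i : ℕ} (hi : i < n) {e : Edge}
    (he : e ∈ tileEdges (tilePos d i)) : e ∈ edges d n :=
  Finset.mem_biUnion.2 ⟨i, Finset.mem_Ico.2 ⟨i.zero_le, hi⟩, he⟩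

/- `X i` is the corner of tile `i` at level `i + 1` that is matched upwards. If it is not the
glued corner `d i` (the south-west corner of tile `i + 1`), its partner is
`northEast d i = corner d (i + 1) (d i).swap`, so `X (i + 1)` has to be `d i`. -/
def IsAdmissible (X : ℕ → Dir) : Prop := ∀ i, X i ≠ d i → X (i + 1) = d i

def flipState (j i : ℕ) : Dir := if i < j then d i else if i = j then (d i).swap else d (i - 1)

lemma isAdmissible_flipState (j : ℕ) : IsAdmissible d (flipState d j) := by
  intro i hi
  have hji : j ≤ i := not_lt.1 fun h => hi (if_pos h)
  rw [flipState, if_neg (by omega), if_neg (by omega), Nat.add_sub_cancel]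

lemma flipState_self_ne {j k : ℕ} (h : j < k) : flipState d j j ≠ flipState d k j := by
  rw [flipState, flipState, if_neg (lt_irrefl j), if_pos rfl, if_pos h]
  exact Dir.swap_ne_self _

variable (n : ℕ) (X : ℕ → Dir)

/- The edge between levels `t` and `t + 1`. For `t = i + 1` it starts at `corner d i (X i)`;
when this is the south-west corner of tile `i + 1` the edge lies in that tile, otherwise it
ends at `northEast d i`. -/
def matchingEdge : ℕ → Edge
  | 0 => edgeFrom (tilePos d 0) (X 0).swap
  | i + 1 =>
    if i + 1 < n ∧ X i = d i then edgeFrom (tilePos d (i + 1)) (X (i + 1)).swap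
    else edgeFrom (corner d i (X i)) (X i).swap

def lowerEnd : ℕ → Vertex
  | 0 => tilePos d 0
  | i + 1 => corner d i (X i)

def upperEnd : ℕ → Vertex
  | 0 => corner d 0 (X 0).swap
  | i + 1 => if i + 1 < n then corner d (i + 1) (X (i + 1)).swap else northEast d i

def matchingOf : Finset Edge := (Finset.range (n + 1)).image (matchingEdge d n X)

lemma level_lowerEnd (t : ℕ) : level (lowerEnd d X t) = t := by
  cases t with
  | zero => exact level_tilePos d 0
  | succ i => exact level_corner d i (X i)

lemma level_upperEnd (t : ℕ) : level (upperEnd d n X t) = t + 1 := by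
  cases t with
  | zero => exact level_corner d 0 _
  | succ i =>
    simp only [upperEnd]
    split_ifs
    · rw [level_corner, Nat.cast_succ]
    · rw [level_northEast, Nat.cast_succ]
      ring

lemma upperEnd_of_lt {t : ℕ} (ht : t < n) : upperEnd d n X t = corner d t (X t).swap := by
  cases t with
  | zero => rfl
  | succ i => exact if_pos ht

lemma lowerEnd_succ_ne_upperEnd {i : ℕ} (hi : i < n) :
    lowerEnd d X (i + 1) ≠ upperEnd d n X i := by
  rw [upperEnd_of_lt d n X hi, lowerEnd]
  exact fun h => Dir.swap_ne_self _ (corner_injective d i h).symm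

lemma endpoints_matchingEdge {X : ℕ → Dir} (hX : IsAdmissible d X) (t : ℕ) :
    endpoints (matchingEdge d n X t) = {lowerEnd d X t, upperEnd d n X t} := by
  cases t with
  | zero => exact endpoints_edgeFrom _ _
  | succ i =>
    simp only [matchingEdge, lowerEnd, upperEnd]
    by_cases hglued : i + 1 < n ∧ X i = d i
    · rw [if_pos hglued, if_pos hglued.1, endpoints_edgeFrom, hglued.2]
      rfl
    · rw [if_neg hglued, endpoints_edgeFrom, corner_add_stepDir_swap]
      split_ifs with hi
      · rw [hX i (fun h => hglued ⟨hi, h⟩), ← northEast_eq_corner_succ]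
      · rfl

lemma matchingEdge_mem_edges (hn : 1 ≤ n) {t : ℕ} (ht : t ≤ n) :
    matchingEdge d n X t ∈ edges d n := by
  cases t with
  | zero => exact mem_edges_of_mem_tileEdges d hn (edgeFrom_mem_tileEdges _ _)
  | succ i =>
    simp only [matchingEdge]
    split_ifs with h
    · exact mem_edges_of_mem_tileEdges d h.1 (edgeFrom_mem_tileEdges _ _)
    · exact mem_edges_of_mem_tileEdges d ht (edgeFrom_add_stepDir_mem_tileEdges _ _)

lemma matchingOf_subset_edges (hn : 1 ≤ n) : matchingOf d n X ⊆ edges d n := by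
  simp only [matchingOf, Finset.image_subset_iff, Finset.mem_range]
  exact fun t ht => matchingEdge_mem_edges d n X hn (Nat.lt_succ_iff.1 ht)

lemma corner_eq_lowerEnd_or_upperEnd {i : ℕ} (hi : i < n) (a : Dir) :
    ∃ t ≤ n, corner d i a = lowerEnd d X t ∨ corner d i a = upperEnd d n X t := by
  by_cases ha : X i = a
  · exact ⟨i + 1, hi, Or.inl (by rw [lowerEnd, ha])⟩
  · refine ⟨i, hi.le, Or.inr ?_⟩
    rw [upperEnd_of_lt d n X hi, ← Dir.eq_swap_of_ne (Ne.symm ha)]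

lemma exists_eq_lowerEnd_or_upperEnd {v : Vertex} (hv : v ∈ vertices d n) :
    ∃ t ≤ n, v = lowerEnd d X t ∨ v = upperEnd d n X t := by
  obtain ⟨i, hi, hv⟩ := Finset.mem_biUnion.1 hv
  have hi : i < n := (Finset.mem_Ico.1 hi).2
  simp only [tileVertices_eq, Finset.mem_insert, Finset.mem_singleton] at hv
  rcases hv with rfl | rfl | rfl | rfl
  · cases i with
    | zero => exact ⟨0, n.zero_le, Or.inl rfl⟩
    | succ j => exact corner_eq_lowerEnd_or_upperEnd d n X (Nat.lt_of_succ_lt hi) (d j)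
  · exact corner_eq_lowerEnd_or_upperEnd d n X hi _
  · exact corner_eq_lowerEnd_or_upperEnd d n X hi _
  · by_cases hlast : i + 1 < n
    · rw [← northEast, northEast_eq_corner_succ]
      exact corner_eq_lowerEnd_or_upperEnd d n X hlast _
    · exact ⟨i + 1, hi, Or.inr (if_neg hlast).symm⟩

variable {d n X}

lemma eq_of_mem_endpoints_matchingEdge (hX : IsAdmissible d X) {v : Vertex} {s t : ℕ}
    (hs : s ≤ n) (ht : t ≤ n) (hvs : v ∈ endpoints (matchingEdge d n X s))
    (hvt : v ∈ endpoints (matchingEdge d n X t)) : s = t := by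
  rw [endpoints_matchingEdge d n hX, Finset.mem_insert, Finset.mem_singleton] at hvs hvt
  have hlo := level_lowerEnd d X
  have hup := level_upperEnd d n X
  rcases hvs with rfl | rfl <;> rcases hvt with h | h <;> have hl := congrArg level h
  · rw [hlo, hlo] at hl
    exact_mod_cast hl
  · rw [hlo, hup] at hl
    obtain rfl : s = t + 1 := by exact_mod_cast hl
    exact absurd h (lowerEnd_succ_ne_upperEnd d n X hs)
  · rw [hup, hlo] at hl
    obtain rfl : t = s + 1 := by exact_mod_cast hl.symm
    exact absurd h.symm (lowerEnd_succ_ne_upperEnd d n X ht)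
  · rw [hup, hup] at hl
    exact_mod_cast add_right_cancel hl

lemma card_filter_mem_endpoints_matchingOf (hX : IsAdmissible d X) {v : Vertex}
    (hv : v ∈ vertices d n) :
    ((matchingOf d n X).filter fun e => v ∈ endpoints e).card = 1 := by
  obtain ⟨t, ht, hvt⟩ := exists_eq_lowerEnd_or_upperEnd d n X hv
  have hvt : v ∈ endpoints (matchingEdge d n X t) := by
    rw [endpoints_matchingEdge d n hX, Finset.mem_insert, Finset.mem_singleton]
    exact hvt
  rw [Finset.card_eq_one]
  refine ⟨matchingEdge d n X t, Finset.ext fun e => ?_⟩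
  simp only [matchingOf, Finset.mem_filter, Finset.mem_image, Finset.mem_range,
    Finset.mem_singleton, Nat.lt_succ_iff]
  constructor
  · rintro ⟨⟨s, hs, rfl⟩, hvs⟩
    rw [eq_of_mem_endpoints_matchingEdge hX hs ht hvs hvt]
  · rintro rfl
    exact ⟨⟨t, ht, rfl⟩, hvt⟩

lemma isPerfectMatching_matchingOf (hn : 1 ≤ n) (hX : IsAdmissible d X) :
    IsPerfectMatching d n (matchingOf d n X) :=
  ⟨matchingOf_subset_edges d n X hn, fun _ hv => card_filter_mem_endpoints_matchingOf hX hv⟩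

lemma eq_of_matchingOf_eq {Y : ℕ → Dir} (hX : IsAdmissible d X) (hY : IsAdmissible d Y)
    (h : matchingOf d n X = matchingOf d n Y) {i : ℕ} (hi : i < n) : X i = Y i := by
  have hmem : matchingEdge d n X (i + 1) ∈ matchingOf d n Y :=
    h ▸ Finset.mem_image_of_mem _ (Finset.mem_range.2 (Nat.succ_lt_succ hi))
  obtain ⟨s, -, hs⟩ := Finset.mem_image.1 hmem
  have hlow : lowerEnd d Y s = lowerEnd d X (i + 1) := by
    refine eq_of_pair_eq_of_level_lt (b := upperEnd d n Y s) (e := upperEnd d n X (i + 1))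
      ?_ ?_ ?_
    · rw [← endpoints_matchingEdge d n hY, ← endpoints_matchingEdge d n hX, hs]
    all_goals rw [level_lowerEnd, level_upperEnd]; exact lt_add_one _
  obtain rfl : s = i + 1 := by
    have := congrArg level hlow
    rwa [level_lowerEnd, level_lowerEnd, Nat.cast_inj] at this
  exact (corner_injective d i hlow).symm

variable (d n)

lemma matchingOf_flipState_injective :
    Function.Injective fun j : Fin (n + 1) => matchingOf d n (flipState d j) := by
  intro j k h
  rcases lt_trichotomy j k with hjk | rfl | hkj
  · exact absurd (eq_of_matchingOf_eq (isAdmissible_flipState d j) (isAdmissible_flipState d k)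
      h (by omega)) (flipState_self_ne d hjk)
  · rfl
  · exact absurd (eq_of_matchingOf_eq (isAdmissible_flipState d k) (isAdmissible_flipState d j)
      h.symm (by omega)) (flipState_self_ne d hkj)

instance finite_isPerfectMatching : Finite {M : Finset Edge // IsPerfectMatching d n M} :=
  Set.Finite.to_subtype <| ((edges d n).powerset.finite_toSet).subset
    fun _ hM => Finset.mem_coe.2 (Finset.mem_powerset.2 hM.1)

end SnakeGraph

open SnakeGraph in
/-- Every snake graph with `n` tiles has at least `n + 1` perfect matchings. -/
theorem snakeGraph_card_perfectMatchings_ge (d : ℕ → Dir) (n : ℕ)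
    (hn : 1 ≤ n) :
    n + 1 ≤ Nat.card {M : Finset Edge // IsPerfectMatching d n M} := by
  let matchings (j : Fin (n + 1)) : {M : Finset Edge // IsPerfectMatching d n M} :=
    ⟨matchingOf d n (flipState d j), isPerfectMatching_matchingOf hn (isAdmissible_flipState d j)⟩
  have h := Nat.card_le_card_of_injective matchings
    fun j k hjk => matchingOf_flipState_injective d n (congrArg Subtype.val hjk)
  simpa using h
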